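/- Let m = 2r be a positive even integer, n ≥ 1, and k = m + n. Let H^1, …, H^n be symmetric m×m real matrices. Then (1/ω_{k−1}) ∫_{S^{n−1}} det(Σ_{γ=1}^{n} ν_γ H^γ) dV_{S^{n−1}}(ν) = (1/(2^m π^r)) Σ_{σ ∈ S_m} Σ_{α} sgn(σ) (∏_{i=1}^{n} (2a_i)!/a_i!) ∏_{t=1}^{m} H^{α_t}_{t, σ(t)}, where the inner sum is over all m-tuples α = (α_1, …, α_m) ∈ {1, …, n}^m in which every index i ∈ {1, …, n} occurs an even number 2a_i of times (so that a_1 + ⋯ + a_n = r), and the a_i in the weight are these multiplicities. -/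

import Mathlib

open MeasureTheory Finset

/-- The standard surface (spherical) measure on the unit sphere `S^{n-1} ⊂ ℝ^n`. -/
noncomputable def sphereMeasure (n : ℕ) :
    Measure (Metric.sphere (0 : EuclideanSpace ℝ (Fin n)) 1) :=
  (volume : Measure (EuclideanSpace ℝ (Fin n))).toSphere

/-- `ω_d`, the `d`-dimensional volume of the unit sphere `S^d ⊂ ℝ^{d+1}`,
namely `2 π^{(d+1)/2} / Γ((d+1)/2)` (so that `ω_0 = 2`). -/
noncomputable def sphereVolume (d : ℕ) : ℝ :=
  2 * Real.pi ^ (((d : ℝ) + 1) / 2) / Real.Gamma (((d : ℝ) + 1) / 2)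

/-!
Expanding the determinant multilinearly turns the integrand into a combination of monomials
`∏ ν_i ^ c_i` with `∑ c_i = 2r`. Such a monomial is homogeneous of degree `2r`, so polar
coordinates factor its Gaussian integral over `ℝⁿ` as its integral over the sphere times
`Γ((2r + n)/2) / 2`, while Fubini factors the same Gaussian integral as
`∏ ∫ t ^ c_i e^{-t²} dt`. That product vanishes unless every `c_i = 2a_i` is even, and then
equals `∏ Γ(a_i + 1/2) = π^{n/2} ∏ (2a_i)! / (4^{a_i} a_i!)`. Dividing by
`ω_{k-1} = 2 π^{k/2} / Γ(k/2)` leaves the weights `∏ (2a_i)!/a_i!` over `2^{2r} π^r`.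
-/

open Real Set Metric
open scoped Nat

theorem integral_Ioi_pow_mul_exp_neg_sq (d : ℕ) :
    ∫ x in Ioi (0 : ℝ), x ^ d * exp (-x ^ 2) = Gamma ((d + 1) / 2) / 2 := by
  have h := integral_rpow_mul_exp_neg_rpow (p := 2) (q := d) two_pos
    (neg_one_lt_zero.trans_le d.cast_nonneg)
  simp only [rpow_natCast, rpow_two] at h
  rw [h]
  ring

theorem integral_pow_mul_exp_neg_sq_of_odd {d : ℕ} (hd : Odd d) :
    ∫ x : ℝ, x ^ d * exp (-x ^ 2) = 0 := by
  have h := integral_neg_eq_self (fun x : ℝ => x ^ d * exp (-x ^ 2)) volume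
  simp only [hd.neg_pow, neg_sq, neg_mul, integral_neg] at h
  linarith

theorem integral_pow_mul_exp_neg_sq_of_even {d : ℕ} (hd : Even d) :
    ∫ x : ℝ, x ^ d * exp (-x ^ 2) = Gamma ((d + 1) / 2) := by
  have h := integral_comp_abs (f := fun x : ℝ => x ^ d * exp (-x ^ 2))
  simp only [hd.pow_abs, sq_abs, integral_Ioi_pow_mul_exp_neg_sq] at h
  linarith

theorem Nat.factorial_two_mul_eq_doubleFactorial_mul (a : ℕ) :
    (2 * a)! = (2 * a - 1)‼ * 2 ^ a * a ! := by
  cases a with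
  | zero => rfl
  | succ a =>
    rw [show 2 * (a + 1) = 2 * a + 1 + 1 by ring, Nat.factorial_eq_mul_doubleFactorial,
      show 2 * a + 1 + 1 = 2 * (a + 1) by ring, Nat.doubleFactorial_two_mul,
      show 2 * (a + 1) - 1 = 2 * a + 1 by omega]
    ring

theorem integral_pow_two_mul_mul_exp_neg_sq (a : ℕ) :
    ∫ x : ℝ, x ^ (2 * a) * exp (-x ^ 2) = √π * (2 * a)! / (4 ^ a * a !) := by
  rw [integral_pow_mul_exp_neg_sq_of_even (even_two_mul a),
    Nat.factorial_two_mul_eq_doubleFactorial_mul,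
    show ((2 * a : ℕ) + 1 : ℝ) / 2 = a + 1 / 2 by push_cast; ring, Gamma_nat_add_half,
    show (4 : ℝ) ^ a = 2 ^ a * 2 ^ a by rw [← mul_pow]; norm_num]
  have hfac : (a ! : ℝ) ≠ 0 := by positivity
  push_cast
  field_simp

theorem integral_pow_mul_exp_neg_sq (d : ℕ) :
    ∫ x : ℝ, x ^ d * exp (-x ^ 2)
      = if Even d then √π * (d ! / (d / 2)! : ℝ) / 4 ^ (d / 2) else 0 := by
  split_ifs with hd
  · obtain ⟨a, rfl⟩ := hd
    rw [← two_mul, integral_pow_two_mul_mul_exp_neg_sq, Nat.mul_div_cancel_left a two_pos]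
    ring
  · exact integral_pow_mul_exp_neg_sq_of_odd (Nat.not_even_iff_odd.1 hd)

theorem prod_integral_pow_mul_exp_neg_sq {ι : Type*} [Fintype ι] {r : ℕ} (c : ι → ℕ)
    (hsum : ∑ i, c i = 2 * r) :
    ∏ i, ∫ x : ℝ, x ^ c i * exp (-x ^ 2)
      = if ∀ i, Even (c i) then
          √π ^ Fintype.card ι / 4 ^ r * ∏ i, ((c i)! / (c i / 2)! : ℝ) else 0 := by
  simp only [integral_pow_mul_exp_neg_sq]
  split_ifs with hev
  · have hhalf : ∑ i, c i / 2 = r := by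
      have htwice : ∀ i, c i / 2 * 2 = c i := fun i => Nat.div_mul_cancel (hev i).two_dvd
      rw [← Nat.mul_left_cancel_iff two_pos, mul_sum, ← hsum]
      exact sum_congr rfl fun i _ => by rw [mul_comm, htwice]
    rw [prod_ite_of_true fun i _ => hev i, prod_div_distrib, prod_mul_distrib, prod_const,
      prod_pow_eq_pow_sum, hhalf, card_univ]
    ring
  · push Not at hev
    obtain ⟨i, hi⟩ := hev
    exact prod_eq_zero (mem_univ i) (if_neg hi)

theorem integral_volumeIoiPow_pow_mul_exp_neg_sq (k S : ℕ) :
    ∫ ρ : Ioi (0 : ℝ), (ρ : ℝ) ^ S * exp (-(ρ : ℝ) ^ 2) ∂Measure.volumeIoiPow k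
      = Gamma ((S + k + 1) / 2) / 2 := by
  simp only [Measure.volumeIoiPow, ENNReal.ofReal]
  rw [integral_withDensity_eq_integral_smul ((measurable_subtype_coe.pow_const _).real_toNNReal),
    integral_subtype_comap measurableSet_Ioi
      (fun y : ℝ => (y ^ k).toNNReal • (y ^ S * exp (-y ^ 2))),
    setIntegral_congr_fun measurableSet_Ioi (g := fun x : ℝ => x ^ (S + k) * exp (-x ^ 2)),
    integral_Ioi_pow_mul_exp_neg_sq]
  · push_cast
    rfl
  · intro x hx
    dsimp only
    rw [NNReal.smul_def, Real.coe_toNNReal _ (pow_nonneg hx.out.le _), smul_eq_mul, pow_add]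
    ring

section Polar

variable {E : Type*} [NormedAddCommGroup E] [NormedSpace ℝ E] [FiniteDimensional ℝ E]
  [MeasurableSpace E] [BorelSpace E] [Nontrivial E] (μ : Measure E) [μ.IsAddHaarMeasure]

theorem integral_mul_exp_neg_norm_sq_of_homogeneous {f : E → ℝ} {S : ℕ}
    (hf : ∀ (x : E) (ρ : ℝ), 0 < ρ → f (ρ • x) = ρ ^ S * f x) :
    ∫ x, f x * exp (-‖x‖ ^ 2) ∂μ
      = (∫ ν, f ν ∂μ.toSphere) * (Gamma ((S + Module.finrank ℝ E) / 2) / 2) := by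
  set g : sphere (0 : E) 1 × Ioi (0 : ℝ) → ℝ :=
    fun p => f p.1 * ((p.2 : ℝ) ^ S * exp (-(p.2 : ℝ) ^ 2))
  calc ∫ x, f x * exp (-‖x‖ ^ 2) ∂μ
      = ∫ x : ({0}ᶜ : Set E), f x * exp (-‖(x : E)‖ ^ 2) ∂(μ.comap (↑)) := by
        rw [integral_subtype_comap (measurableSet_singleton _).compl
          (fun x => f x * exp (-‖x‖ ^ 2)), restrict_compl_singleton]
    _ = ∫ x : ({0}ᶜ : Set E), g (homeomorphUnitSphereProd E x) ∂(μ.comap (↑)) := by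
        congr with x
        have hx : 0 < ‖(x : E)‖ := norm_pos_iff.2 x.2
        have hfx : f x = ‖(x : E)‖ ^ S * f (‖(x : E)‖⁻¹ • (x : E)) := by
          rw [← hf _ _ hx, smul_inv_smul₀ hx.ne']
        rw [hfx]
        simp only [g, homeomorphUnitSphereProd_apply_fst_coe,
          homeomorphUnitSphereProd_apply_snd_coe]
        ring
    _ = ∫ p, g p ∂(μ.toSphere.prod (.volumeIoiPow (Module.finrank ℝ E - 1))) :=
        μ.measurePreserving_homeomorphUnitSphereProd.integral_comp
          (Homeomorph.measurableEmbedding _) g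
    _ = _ := by
        refine (integral_prod_mul (fun ν : sphere (0 : E) 1 => f ν)
          (fun ρ : Ioi (0 : ℝ) => (ρ : ℝ) ^ S * exp (-(ρ : ℝ) ^ 2))).trans ?_
        rw [integral_volumeIoiPow_pow_mul_exp_neg_sq, add_assoc,
          ← Nat.cast_add_one, Nat.sub_add_cancel Module.finrank_pos]

end Polar

theorem EuclideanSpace.integral_prod_pow_mul_exp_neg_norm_sq {ι : Type*} [Fintype ι]
    (c : ι → ℕ) :
    ∫ x : EuclideanSpace ℝ ι, (∏ i, x i ^ c i) * exp (-‖x‖ ^ 2)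
      = ∏ i, ∫ t : ℝ, t ^ c i * exp (-t ^ 2) := by
  rw [← (PiLp.volume_preserving_toLp ι).integral_comp
    (MeasurableEquiv.toLp 2 (ι → ℝ)).measurableEmbedding]
  simp only [EuclideanSpace.real_norm_sq_eq, ← sum_neg_distrib, exp_sum,
    ← prod_mul_distrib]
  exact integral_fintype_prod_eq_prod (fun _ (t : ℝ) => t ^ _ * exp (-t ^ 2))

theorem integral_sphereMeasure_prod_pow_mul_Gamma {n : ℕ} (hn : 0 < n) (c : Fin n → ℕ) :
    (∫ ν, ∏ i, (ν : EuclideanSpace ℝ (Fin n)) i ^ c i ∂sphereMeasure n)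
        * (Gamma (((∑ i, c i : ℕ) + n) / 2) / 2)
      = ∏ i, ∫ t : ℝ, t ^ c i * exp (-t ^ 2) := by
  have : Nonempty (Fin n) := Fin.pos_iff_nonempty.1 hn
  rw [← EuclideanSpace.integral_prod_pow_mul_exp_neg_norm_sq,
    integral_mul_exp_neg_norm_sq_of_homogeneous, finrank_euclideanSpace_fin, sphereMeasure]
  intro x ρ _
  simp only [PiLp.smul_apply, smul_eq_mul, mul_pow, prod_mul_distrib, prod_pow_eq_pow_sum]

theorem sphereVolume_inv_mul_integral_prod_pow {n r : ℕ} (hn : 0 < n) (c : Fin n → ℕ)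
    (hsum : ∑ i, c i = 2 * r) :
    (1 / sphereVolume (2 * r + n - 1))
        * ∫ ν, ∏ i, (ν : EuclideanSpace ℝ (Fin n)) i ^ c i ∂sphereMeasure n
      = if ∀ i, Even (c i) then
          1 / (2 ^ (2 * r) * π ^ r) * ∏ i, ((c i)! / (c i / 2)! : ℝ) else 0 := by
  have hmoment := integral_sphereMeasure_prod_pow_mul_Gamma hn c
  set I := ∫ ν, ∏ i, (ν : EuclideanSpace ℝ (Fin n)) i ^ c i ∂sphereMeasure n
  rw [prod_integral_pow_mul_exp_neg_sq c hsum, hsum, Fintype.card_fin] at hmoment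
  have hdim : ((2 * r + n - 1 : ℕ) + 1 : ℝ) / 2 = ((2 * r : ℕ) + n) / 2 := by
    rw [← Nat.cast_add_one, Nat.sub_add_cancel (by omega)]
    push_cast
    ring
  have hpow : π ^ (((2 * r : ℕ) + n : ℝ) / 2) = π ^ r * √π ^ n := by
    rw [show ((2 * r : ℕ) + n : ℝ) / 2 = r + 1 / 2 * n by push_cast; ring,
      rpow_add pi_pos, rpow_natCast, rpow_mul pi_pos.le, rpow_natCast, ← sqrt_eq_rpow]
  have h4 : (4 : ℝ) ^ r = 2 ^ (2 * r) := by rw [pow_mul]; norm_num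
  rw [sphereVolume, hdim, hpow, one_div_div, div_mul_eq_mul_div,
    show Gamma _ * I = 2 * (I * (Gamma (((2 * r : ℕ) + n : ℝ) / 2) / 2)) by ring, hmoment]
  split_ifs
  · rw [← h4]
    field_simp
  · simp

theorem Matrix.det_sum_smul {R m ι : Type*} [CommRing R] [Fintype m] [DecidableEq m]
    [Fintype ι] [DecidableEq ι] (x : ι → R) (M : ι → Matrix m m R) :
    (∑ γ, x γ • M γ).det
      = ∑ σ : Equiv.Perm m, ∑ α : m → ι,
          ((Equiv.Perm.sign σ : ℤ) : R) * (∏ t, M (α t) t (σ t))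
            * ∏ i, x i ^ #{t | α t = i} := by
  rw [← det_transpose, det_apply']
  refine sum_congr rfl fun σ _ => ?_
  simp only [transpose_apply, sum_apply, smul_apply, smul_eq_mul, prod_univ_sum,
    Fintype.piFinset_univ, mul_sum]
  refine sum_congr rfl fun α _ => ?_
  rw [prod_mul_distrib, ← prod_fiberwise' univ α x]
  simp only [prod_const]
  ring

theorem integrable_sphereMeasure_prod_pow {n : ℕ} (c : Fin n → ℕ) :
    Integrable (fun ν : sphere (0 : EuclideanSpace ℝ (Fin n)) 1 =>
      ∏ i, (ν : EuclideanSpace ℝ (Fin n)) i ^ c i) (sphereMeasure n) := by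
  rw [sphereMeasure]
  exact Continuous.integrable_of_hasCompactSupport (by fun_prop) (.of_compactSpace _)

theorem averaged_curvature_expansion_general (r n : ℕ) (hn : 0 < n)
    (H : Fin n → Matrix (Fin (2 * r)) (Fin (2 * r)) ℝ) :
    (1 / sphereVolume (2 * r + n - 1)) *
      ∫ ν, Matrix.det (∑ γ : Fin n, ((ν : EuclideanSpace ℝ (Fin n)) γ) • H γ)
        ∂(sphereMeasure n) =
    (1 / (2 ^ (2 * r) * Real.pi ^ r)) *
      ∑ σ : Equiv.Perm (Fin (2 * r)), ∑ α : Fin (2 * r) → Fin n,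
        if ∀ i : Fin n, Even (Finset.univ.filter (fun t => α t = i)).card then
          ((Equiv.Perm.sign σ : ℤ) : ℝ) *
            (∏ i : Fin n,
              ((Nat.factorial ((Finset.univ.filter (fun t => α t = i)).card) : ℝ) /
                (Nat.factorial ((Finset.univ.filter (fun t => α t = i)).card / 2) : ℝ))) *
            ∏ t : Fin (2 * r), H (α t) t (σ t)
        else 0 := by
  have hcard (α : Fin (2 * r) → Fin n) : ∑ i, #{t | α t = i} = 2 * r := by
    rw [← card_eq_sum_card_fiberwise fun t _ => mem_univ (α t), card_univ, Fintype.card_fin]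
  simp_rw [Matrix.det_sum_smul]
  rw [integral_finsetSum _ fun σ _ => integrable_finsetSum _ fun α _ =>
    (integrable_sphereMeasure_prod_pow _).const_mul _]
  simp only [integral_finsetSum _ fun α _ => (integrable_sphereMeasure_prod_pow _).const_mul _,
    integral_const_mul, mul_sum]
  refine sum_congr rfl fun σ _ => sum_congr rfl fun α _ => ?_
  rw [mul_left_comm, sphereVolume_inv_mul_integral_prod_pow hn _ (hcard α)]
  split_ifs <;> ring

/-- The averaged generalized Gaussian curvature in terms of the second fundamental
forms `H^γ`: with `m = 2r` and `k = m + n`,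
`(1/ω_{k-1}) ∫_{S^{n-1}} det(∑ ν_γ H^γ) dV
  = (1/(2^m π^r)) ∑_{σ ∈ S_m} ∑_α sgn(σ) (∏ (2a_i)!/a_i!) ∏_t H^{α_t}_{t,σ(t)}`,
where the inner sum runs over tuples `α ∈ {1,…,n}^m` in which each index `i` occurs an
even number `2a_i` of times. -/
theorem averaged_curvature_expansion (r n : ℕ) (hr : 0 < r) (hn : 0 < n)
    (H : Fin n → Matrix (Fin (2 * r)) (Fin (2 * r)) ℝ) (hH : ∀ γ, (H γ).IsSymm) :
    (1 / sphereVolume (2 * r + n - 1)) *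
      ∫ ν, Matrix.det (∑ γ : Fin n, ((ν : EuclideanSpace ℝ (Fin n)) γ) • H γ)
        ∂(sphereMeasure n) =
    (1 / (2 ^ (2 * r) * Real.pi ^ r)) *
      ∑ σ : Equiv.Perm (Fin (2 * r)), ∑ α : Fin (2 * r) → Fin n,
        if ∀ i : Fin n, Even (Finset.univ.filter (fun t => α t = i)).card then
          ((Equiv.Perm.sign σ : ℤ) : ℝ) *
            (∏ i : Fin n,
              ((Nat.factorial ((Finset.univ.filter (fun t => α t = i)).card) : ℝ) /
                (Nat.factorial ((Finset.univ.filter (fun t => α t = i)).card / 2) : ℝ))) *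
            ∏ t : Fin (2 * r), H (α t) t (σ t)
        else 0 :=
  averaged_curvature_expansion_general r n hn H
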